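/- arXiv:1703.02288 — 8 statements merged into one kernel-verified Lean document; each statement's English description precedes it below -/
import Mathlib

section
/- Let X be a finite discrete space with at least two elements, Γ a nonempty set, and φ : Γ → Γ. If φ has a periodic point, then the generalized shift dynamical system (X^Γ, σ_φ) does not have the almost weak specification property. -/
open Filter

/-- The generalized shift `σ_φ` on `X^Γ`. -/
def genShift {X Γ : Type*} (φ : Γ → Γ) (x : Γ → X) : Γ → X := fun γ => x (φ γ)

/-- The basic entourage `α_H` of agreement on `H ⊆ Γ`. -/
def agreeEnt (X : Type*) {Γ : Type*} (H : Set Γ) : Set ((Γ → X) × (Γ → X)) :=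
  {p | ∀ γ ∈ H, p.1 γ = p.2 γ}

/-- Membership in the unique compatible uniform structure `𝒰` on `X^Γ`:
`D` contains some `α_H` with `H ⊆ Γ` finite. -/
def IsProdEntourage (X : Type*) {Γ : Type*} (D : Set ((Γ → X) × (Γ → X))) : Prop :=
  ∃ H : Set Γ, H.Finite ∧ agreeEnt X H ⊆ D

/-- Almost weak specification property for `(X^Γ, σ_φ)`. -/
def AlmostWeakSpec {X Γ : Type*} (φ : Γ → Γ) : Prop :=
  ∀ D : Set ((Γ → X) × (Γ → X)), IsProdEntourage X D →
    ∃ N : ℕ → ℕ, Tendsto (fun n : ℕ => (N n : ℝ) / (n : ℝ)) atTop (nhds 0) ∧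
      ∀ n : ℕ, 2 ≤ n → ∀ y : ℕ → Γ → X, ∀ l k : ℕ → ℕ,
        (∀ j, j < n → l j ≤ k j) →
        (∀ j, j + 1 < n → k j < l (j + 1) ∧ N (k (j + 1) - l (j + 1)) ≤ l (j + 1) - k j) →
        ∃ x : Γ → X, ∀ j, j < n → ∀ i, l j ≤ i → i ≤ k j →
          ((genShift φ)^[i] x, (genShift φ)^[i] (y j)) ∈ D

/-- Weak specification property for `(X^Γ, σ_φ)`: the gap function is constant. -/
def WeakSpec {X Γ : Type*} (φ : Γ → Γ) : Prop :=
  ∀ D : Set ((Γ → X) × (Γ → X)), IsProdEntourage X D →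
    ∃ N : ℕ,
      ∀ n : ℕ, 2 ≤ n → ∀ y : ℕ → Γ → X, ∀ l k : ℕ → ℕ,
        (∀ j, j < n → l j ≤ k j) →
        (∀ j, j + 1 < n → k j < l (j + 1) ∧ N ≤ l (j + 1) - k j) →
        ∃ x : Γ → X, ∀ j, j < n → ∀ i, l j ≤ i → i ≤ k j →
          ((genShift φ)^[i] x, (genShift φ)^[i] (y j)) ∈ D

/-- Specification property for `(X^Γ, σ_φ)`: weak specification where the tracing
point can be chosen periodic for `σ_φ`. -/
def Spec {X Γ : Type*} (φ : Γ → Γ) : Prop :=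
  ∀ D : Set ((Γ → X) × (Γ → X)), IsProdEntourage X D →
    ∃ N : ℕ,
      ∀ n : ℕ, 2 ≤ n → ∀ y : ℕ → Γ → X, ∀ l k : ℕ → ℕ,
        (∀ j, j < n → l j ≤ k j) →
        (∀ j, j + 1 < n → k j < l (j + 1) ∧ N ≤ l (j + 1) - k j) →
        ∃ x : Γ → X, (∃ m : ℕ, 1 ≤ m ∧ (genShift φ)^[m] x = x) ∧
          ∀ j, j < n → ∀ i, l j ≤ i → i ≤ k j →
            ((genShift φ)^[i] x, (genShift φ)^[i] (y j)) ∈ D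

/-- if `φ` has a periodic point then `(X^Γ, σ_φ)` does not have the
almost weak specification property. -/
theorem stmt_4 {X Γ : Type*} [Fintype X] [Nontrivial X] [Nonempty Γ] (φ : Γ → Γ)
    (h : ∃ lam : Γ, ∃ m : ℕ, 1 ≤ m ∧ φ^[m] lam = lam) :
    ¬ AlmostWeakSpec (X := X) φ := by
  obtain ⟨lam, m, hm, hlam⟩ := h
  obtain ⟨a, b, hab⟩ : ∃ a b : X, a ≠ b := Nontrivial.exists_pair_ne
  intro hA
  have hiter : ∀ (i : ℕ) (x : Γ → X) (γ : Γ),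
      ((genShift φ)^[i] x) γ = x (φ^[i] γ) := by
    intro i
    induction i with
    | zero => intro x γ; rfl
    | succ i ih =>
      intro x γ
      rw [Function.iterate_succ_apply, ih, Function.iterate_succ_apply']
      rfl
  obtain ⟨N, _, hspec⟩ := hA (agreeEnt X {lam}) ⟨{lam}, Set.finite_singleton lam, le_rfl⟩
  set T : ℕ := m * (N 0 + 1) with hT
  have hTpos : 0 < T := Nat.mul_pos hm (Nat.succ_pos _)
  have hTN : N 0 ≤ T := by
    calc N 0 ≤ N 0 + 1 := Nat.le_succ _
    _ ≤ m * (N 0 + 1) := Nat.le_mul_of_pos_left _ hm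
  obtain ⟨x, hx⟩ := hspec 2 le_rfl
    (fun j => if j = 0 then (fun _ => a) else (fun _ => b))
    (fun j => if j = 0 then 0 else T) (fun j => if j = 0 then 0 else T)
    (by intro j _; simp)
    (by
      intro j hj
      have : j = 0 := by omega
      subst this
      simp only [if_pos rfl, Nat.zero_add, if_neg (Nat.one_ne_zero)]
      exact ⟨hTpos, by simpa using hTN⟩)
  have h0 : x lam = a := by
    have := hx 0 (by norm_num) 0 (by simp) (by simp)
    have := this lam rfl
    simpa [hiter] using this
  have h1 : x lam = b := by
    have := hx 1 (by norm_num) T (by simp) (by simp)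
    have := this lam rfl
    have hfix : φ^[T] lam = lam := by
      rw [hT, Function.iterate_mul]
      exact Function.iterate_fixed hlam _
    simpa [hiter, hfix] using this
  exact hab (h0 ▸ h1)
end

section
/- Let X be a finite discrete space with at least two elements, Γ a nonempty set, and φ : Γ → Γ. If φ has no periodic point, then the generalized shift dynamical system (X^Γ, σ_φ) has the weak specification property. -/
open Filter

lemma genShift_iterate {X Γ : Type*} (φ : Γ → Γ) (x : Γ → X) (i : ℕ) (γ : Γ) :
    (genShift φ)^[i] x γ = x (φ^[i] γ) := by
  induction i generalizing x with
  | zero => rfl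
  | succ i ih =>
    rw [Function.iterate_succ_apply, ih, Function.iterate_succ_apply']
    rfl

/-- if `φ` has no periodic point then `(X^Γ, σ_φ)` has the weak
specification property. -/
theorem stmt_5 {X Γ : Type*} [Fintype X] [Nontrivial X] [Nonempty Γ] (φ : Γ → Γ)
    (h : ¬ ∃ lam : Γ, ∃ m : ℕ, 1 ≤ m ∧ φ^[m] lam = lam) :
    WeakSpec (X := X) φ := by
  classical
  intro D hD
  obtain ⟨H, hHfin, hHD⟩ := hD
  have hA : ∀ (z : Γ) (m m' : ℕ), φ^[m] z = φ^[m'] z → m = m' := by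
    intro z m m' hmm
    by_contra hne
    wlog hlt : m < m' generalizing m m'
    · exact this m' m hmm.symm (Ne.symm hne) (by omega)
    exact h ⟨φ^[m] z, m' - m, by omega, by
      rw [← Function.iterate_add_apply, show m' - m + m = m' from by omega, hmm]⟩
  have hB : ∀ (γ γ' : Γ) (i i' j j' : ℕ), φ^[i] γ = φ^[i'] γ' →
      φ^[j] γ = φ^[j'] γ' → i + j' = j + i' := by
    intro γ γ' i i' j j' h1 h2
    have e1 : φ^[j' + i] γ = φ^[j' + i'] γ' := by
      rw [Function.iterate_add_apply, h1, ← Function.iterate_add_apply]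
    have e2 : φ^[i' + j] γ = φ^[i' + j'] γ' := by
      rw [Function.iterate_add_apply, h2, ← Function.iterate_add_apply]
    have e3 : φ^[j' + i] γ = φ^[i' + j] γ := by
      rw [Nat.add_comm i' j'] at e2
      rw [e1, e2]
    have := hA γ (j' + i) (i' + j) e3
    omega
  set P : Γ × Γ → Prop := fun p => ∃ i i' : ℕ, φ^[i] p.1 = φ^[i'] p.2 with hP_def
  set f : Γ × Γ → ℕ := fun p =>
    if hp : P p then hp.choose + hp.choose_spec.choose else 0 with hf_def
  set N : ℕ := 1 + (hHfin.toFinset ×ˢ hHfin.toFinset).sup f with hN_def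
  have key : ∀ γ ∈ H, ∀ γ' ∈ H, ∀ i i' : ℕ, φ^[i] γ = φ^[i'] γ' → i + N ≤ i' → False := by
    intro γ hγ γ' hγ' i i' heq hle
    have hP : P (γ, γ') := ⟨i, i', heq⟩
    have h0 : φ^[hP.choose] γ = φ^[hP.choose_spec.choose] γ' := hP.choose_spec.choose_spec
    have hfval : f (γ, γ') = hP.choose + hP.choose_spec.choose := dif_pos hP
    have hmem : (γ, γ') ∈ hHfin.toFinset ×ˢ hHfin.toFinset := by
      rw [Finset.mem_product, hHfin.mem_toFinset, hHfin.mem_toFinset]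
      exact ⟨hγ, hγ'⟩
    have hsup := Finset.le_sup (f := f) hmem
    have hdiff := hB γ γ' i i' hP.choose hP.choose_spec.choose heq h0
    omega
  refine ⟨N, ?_⟩
  intro n hn y l k hlk hgap
  have hchain : ∀ j₀ j : ℕ, j₀ < j → j < n → k j₀ + N ≤ l j := by
    intro j₀ j hj₀ hj
    induction j with
    | zero => omega
    | succ j ih =>
      rcases Nat.lt_or_ge j₀ j with h1 | h1
      · have hj' : j < n := by omega
        have h4 := ih h1 hj'
        have h2 := hgap j (by omega)
        have h3 := hlk j hj'
        omega
      · have hje : j₀ = j := by omega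
        subst hje
        have h2 := hgap j₀ hj
        omega
  set Q : Γ → Prop := fun z =>
    ∃ j, j < n ∧ ∃ i, l j ≤ i ∧ i ≤ k j ∧ ∃ γ ∈ H, φ^[i] γ = z with hQ_def
  refine ⟨fun z => if hq : Q z then y hq.choose z else Classical.arbitrary X, ?_⟩
  intro j hj i hli hik
  apply hHD
  intro γ hγ
  show (genShift φ)^[i] _ γ = (genShift φ)^[i] (y j) γ
  rw [genShift_iterate, genShift_iterate]
  have hQ : Q (φ^[i] γ) := ⟨j, hj, i, hli, hik, γ, hγ, rfl⟩
  rw [dif_pos hQ]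
  obtain ⟨hj₀, i₀, hli₀, hik₀, γ₀, hγ₀, heq₀⟩ := hQ.choose_spec
  rcases lt_trichotomy hQ.choose j with hlt | heqj | hgt
  · exact absurd (key γ₀ hγ₀ γ hγ i₀ i heq₀ (by
      have := hchain hQ.choose j hlt hj; omega)) (fun hf => hf.elim)
  · rw [heqj]
  · exact absurd (key γ hγ γ₀ hγ₀ i i₀ heq₀.symm (by
      have := hchain j hQ.choose hgt hj₀; omega)) (fun hf => hf.elim)
end

section
/- Let X be a finite discrete space with at least two elements, Γ a nonempty set, and φ : Γ → Γ. Then (X^Γ, σ_φ) has the specification property if and only if φ is one-to-one and has no periodic point. -/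
open Filter

lemma genShift_iter {X Γ : Type*} (φ : Γ → Γ) :
    ∀ (i : ℕ) (x : Γ → X) (γ : Γ), ((genShift φ)^[i] x) γ = x (φ^[i] γ) := by
  intro i
  induction i with
  | zero => intro x γ; rfl
  | succ t ih =>
    intro x γ
    rw [Function.iterate_succ_apply, ih, Function.iterate_succ_apply']
    rfl

/-- `(X^Γ, σ_φ)` has the specification property iff `φ` is one-to-one
without any periodic point. -/
theorem stmt_7 {X Γ : Type*} [Fintype X] [Nontrivial X] [Nonempty Γ] (φ : Γ → Γ) :
    Spec (X := X) φ ↔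
      (Function.Injective φ ∧ ¬ ∃ lam : Γ, ∃ m : ℕ, 1 ≤ m ∧ φ^[m] lam = lam) := by
  classical
  obtain ⟨u, v, huv⟩ := exists_pair_ne X
  constructor
  · -- Spec → injective ∧ no periodic point
    intro hs
    constructor
    · -- injectivity
      intro a b hab
      by_contra hne
      obtain ⟨N, hN⟩ := hs (agreeEnt X {a, b}) ⟨{a, b}, (Set.finite_singleton b).insert a, subset_rfl⟩
      set w : Γ → X := fun γ => if γ = a then u else v with hw
      obtain ⟨x, ⟨m, hm1, hmx⟩, hx⟩ := hN 2 le_rfl (fun _ => w)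
        (fun j => if j = 0 then 0 else N + 1) (fun j => if j = 0 then 0 else N + 1)
        (fun j _ => le_rfl)
        (by intro j hj
            have h0 : j = 0 := by omega
            subst h0
            simp)
      have h0 := hx 0 (by omega) 0 (by simp) (by simp)
      have hxa : x a = w a := h0 a (Set.mem_insert a {b})
      have hxb : x b = w b := h0 b (Set.mem_insert_of_mem a rfl)
      have hwa : w a = u := if_pos rfl
      have hwb : w b = v := if_neg (fun h => hne h.symm)
      -- x is in the image of the shift, hence x a = x b
      have hφm : φ^[m] a = φ^[m] b := by
        obtain ⟨t, ht⟩ := Nat.exists_eq_add_of_le hm1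
        have ht' : m = t + 1 := by omega
        rw [ht', Function.iterate_add_apply, Function.iterate_add_apply]
        simp [hab]
      have : x a = x b := by
        have ha := genShift_iter φ m x a
        have hb := genShift_iter φ m x b
        rw [hmx] at ha hb
        rw [ha, hb, hφm]
      rw [hxa, hxb, hwa, hwb] at this
      exact huv this
    · -- no periodic point
      rintro ⟨lam, m, hm1, hlam⟩
      obtain ⟨N, hN⟩ := hs (agreeEnt X {lam}) ⟨{lam}, Set.finite_singleton lam, subset_rfl⟩
      obtain ⟨x, -, hx⟩ := hN 2 le_rfl (fun j => if j = 0 then (fun _ => u) else (fun _ => v))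
        (fun j => if j = 0 then 0 else m + N) (fun j => if j = 0 then m - 1 else m + N)
        (by intro j hj
            rcases (show j = 0 ∨ j = 1 by omega) with rfl | rfl <;> simp)
        (by intro j hj
            have h0 : j = 0 := by omega
            subst h0
            simp
            omega)
      have horb : ∀ r : ℕ, φ^[r * m] lam = lam := by
        intro r
        induction r with
        | zero => simp
        | succ t ih =>
          have : (t + 1) * m = t * m + m := by ring
          rw [this, Function.iterate_add_apply, hlam, ih]
      have hrm : (m + N) % m < m := Nat.mod_lt _ (by omega)
      have hq : φ^[m * ((m + N) / m)] lam = lam := by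
        rw [Nat.mul_comm]; exact horb _
      have hsplit : φ^[m + N] lam = φ^[(m + N) % m] lam := by
        conv_lhs => rw [← Nat.mod_add_div (m + N) m]
        rw [Function.iterate_add_apply, hq]
      have h1 := hx 0 (by omega) ((m + N) % m) (by simp)
        (by rw [if_pos rfl]; exact Nat.le_pred_of_lt hrm)
      have h2 := hx 1 (by omega) (m + N) (by simp) (by simp)
      have e1 : x (φ^[(m + N) % m] lam) = u := by
        have h := h1 lam rfl
        simpa [genShift_iter] using h
      have e2 : x (φ^[m + N] lam) = v := by
        have h := h2 lam rfl
        simpa [genShift_iter] using h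
      rw [hsplit, e1] at e2
      exact huv e2
  · -- injective ∧ no periodic point → Spec
    rintro ⟨hinj, hper⟩
    intro D hD
    obtain ⟨H, hHfin, hHD⟩ := hD
    have hinj' : ∀ t : ℕ, Function.Injective (φ^[t]) := fun t => hinj.iterate t
    have uniq : ∀ (d d' : ℕ) (γ : Γ), φ^[d] γ = φ^[d'] γ → d = d' := by
      intro d d' γ h
      by_contra hne
      wlog hlt : d < d' generalizing d d'
      · exact this d' d h.symm (Ne.symm hne) (by omega)
      obtain ⟨e, he⟩ := Nat.exists_eq_add_of_lt hlt
      apply hper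
      refine ⟨φ^[d] γ, e + 1, by omega, ?_⟩
      rw [← Function.iterate_add_apply]
      have hd' : e + 1 + d = d' := by omega
      rw [hd', ← h]
    -- bound on the "collision" exponents within H
    have hS : ∃ N : ℕ, ∀ (d : ℕ) (γ γ' : Γ), γ ∈ H → γ' ∈ H → φ^[d] γ = γ' → d < N := by
      set f : Γ × Γ → ℕ := fun p => if h : ∃ d : ℕ, φ^[d] p.1 = p.2 then h.choose else 0 with hf
      have hsub : {d : ℕ | ∃ γ ∈ H, ∃ γ' ∈ H, φ^[d] γ = γ'} ⊆ f '' (H ×ˢ H) := by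
        rintro d ⟨γ, hγ, γ', hγ', h⟩
        refine ⟨(γ, γ'), ⟨hγ, hγ'⟩, ?_⟩
        have hex : ∃ e : ℕ, φ^[e] γ = γ' := ⟨d, h⟩
        have hfe : f (γ, γ') = hex.choose := dif_pos hex
        rw [hfe]
        exact uniq _ _ γ (hex.choose_spec.trans h.symm)
      have hfin : {d : ℕ | ∃ γ ∈ H, ∃ γ' ∈ H, φ^[d] γ = γ'}.Finite :=
        Set.Finite.subset ((hHfin.prod hHfin).image f) hsub
      obtain ⟨b, hb⟩ := hfin.bddAbove
      exact ⟨b + 1, fun d γ γ' hγ hγ' h => by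
        have := hb (Set.mem_setOf.mpr ⟨γ, hγ, γ', hγ', h⟩); omega⟩
    obtain ⟨N, hNb⟩ := hS
    refine ⟨N, ?_⟩
    intro n hn y l k hlk hgap
    set K := (Finset.range n).sup k with hK
    have hkK : ∀ j, j < n → k j ≤ K := fun j hj => Finset.le_sup (Finset.mem_range.mpr hj)
    set m := K + N + 1 with hm
    have chain : ∀ j', j' < n → ∀ j, j < j' → k j < l j' := by
      intro j'
      induction j' with
      | zero => intro _ j hj; exact absurd hj (Nat.not_lt_zero j)
      | succ t ih =>
        intro ht j hj
        have h1 : k t < l (t + 1) := (hgap t ht).1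
        rcases Nat.lt_succ_iff_lt_or_eq.mp hj with h | h
        · have h2 := ih (by omega) j h
          have h3 := hlk t (by omega)
          omega
        · rw [h]; exact h1
    have gapN : ∀ j', j' < n → ∀ j, j < j' → k j + N ≤ l j' := by
      intro j' hj' j hj
      have h1 := hgap j (by omega)
      have h2 : k j + N ≤ l (j + 1) := by omega
      rcases eq_or_lt_of_le (show j + 1 ≤ j' from hj) with h | h
      · rw [← h]; exact h2
      · have h3 := chain j' hj' (j + 1) h
        have h4 := hlk (j + 1) (by omega)
        omega
    have hABle : ∀ p q : ℕ, p < q → p * m + m ≤ q * m := by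
      intro p q hpq
      calc p * m + m = (p + 1) * m := by ring
        _ ≤ q * m := Nat.mul_le_mul (by omega) le_rfl
    have iterate_congr : ∀ (s t : ℕ) (z : Γ), s = t → φ^[s] z = φ^[t] z := by
      intro s t z h; rw [h]
    -- key non-collision lemma
    have key1 : ∀ (j i : ℕ) (γ : Γ) (j' i' : ℕ) (γ' : Γ) (a b : ℕ),
        j < n → l j ≤ i → i ≤ k j → γ ∈ H →
        j' < n → l j' ≤ i' → i' ≤ k j' → γ' ∈ H →
        b * m + i' ≤ a * m + i →
        φ^[a * m + i] γ = φ^[b * m + i'] γ' →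
        y j (φ^[i] γ) = y j' (φ^[i'] γ') := by
      intro j i γ j' i' γ' a b hj hli hik hγ hj' hli' hik' hγ' hle heq
      obtain ⟨d, hd⟩ := Nat.exists_eq_add_of_le hle
      have hdγ : φ^[d] γ = γ' := by
        apply hinj' (b * m + i')
        rw [← Function.iterate_add_apply, ← hd]
        exact heq
      have hdN : d < N := hNb d γ γ' hγ hγ' hdγ
      have hiK : i ≤ K := le_trans hik (hkK j hj)
      have hiK' : i' ≤ K := le_trans hik' (hkK j' hj')
      rcases Nat.lt_trichotomy a b with hab | hab | hab
      · exfalso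
        have h1 := hABle a b hab
        linarith [hd, h1, hiK, hm]
      · subst hab
        have hii : i = i' + d := Nat.add_left_cancel (by linarith [hd])
        have hpt : φ^[i] γ = φ^[i'] γ' := by
          rw [hii, Function.iterate_add_apply, hdγ]
        rcases Nat.lt_trichotomy j j' with hjj | hjj | hjj
        · exfalso
          have := chain j' hj' j hjj
          omega
        · subst hjj
          rw [hpt]
        · exfalso
          have := gapN j hj j' hjj
          omega
      · exfalso
        have h1 := hABle b a hab
        linarith [hd, h1, hiK', hdN, hm]
    have key : ∀ (j i : ℕ) (γ : Γ) (j' i' : ℕ) (γ' : Γ) (a b : ℕ),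
        j < n → l j ≤ i → i ≤ k j → γ ∈ H →
        j' < n → l j' ≤ i' → i' ≤ k j' → γ' ∈ H →
        φ^[a * m + i] γ = φ^[b * m + i'] γ' →
        y j (φ^[i] γ) = y j' (φ^[i'] γ') := by
      intro j i γ j' i' γ' a b hj hli hik hγ hj' hli' hik' hγ' heq
      rcases le_total (b * m + i') (a * m + i) with h | h
      · exact key1 j i γ j' i' γ' a b hj hli hik hγ hj' hli' hik' hγ' h heq
      · exact (key1 j' i' γ' j i γ b a hj' hli' hik' hγ' hj hli hik hγ h heq.symm).symm
    -- combining two relations through a common point z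
    have combine : ∀ (z : Γ) (j i : ℕ) (γ : Γ) (a b : ℕ) (j' i' : ℕ) (γ' : Γ) (a' b' : ℕ),
        j < n → l j ≤ i → i ≤ k j → γ ∈ H →
        j' < n → l j' ≤ i' → i' ≤ k j' → γ' ∈ H →
        φ^[a * m] z = φ^[b * m + i] γ →
        φ^[a' * m] z = φ^[b' * m + i'] γ' →
        y j (φ^[i] γ) = y j' (φ^[i'] γ') := by
      intro z j i γ a b j' i' γ' a' b' hj hli hik hγ hj' hli' hik' hγ' heq1 heq2
      apply key j i γ j' i' γ' (a' + b) (a + b') hj hli hik hγ hj' hli' hik' hγ'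
      calc φ^[(a' + b) * m + i] γ
          = φ^[a' * m] (φ^[b * m + i] γ) := by
            rw [← Function.iterate_add_apply]
            exact iterate_congr _ _ _ (by ring)
        _ = φ^[a' * m] (φ^[a * m] z) := by rw [heq1]
        _ = φ^[a * m] (φ^[a' * m] z) := by
            rw [← Function.iterate_add_apply, ← Function.iterate_add_apply]
            exact iterate_congr _ _ _ (by ring)
        _ = φ^[a * m] (φ^[b' * m + i'] γ') := by rw [heq2]
        _ = φ^[(a + b') * m + i'] γ' := by
            rw [← Function.iterate_add_apply]
            exact iterate_congr _ _ _ (by ring)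
    -- construction of the tracing point
    have hmain : ∃ x : Γ → X, (∀ z : Γ, x (φ^[m] z) = x z) ∧
        (∀ (j i : ℕ) (γ : Γ) (a b : ℕ) (z : Γ), j < n → l j ≤ i → i ≤ k j → γ ∈ H →
          φ^[a * m] z = φ^[b * m + i] γ → x z = y j (φ^[i] γ)) := by
      refine ⟨fun z => if h : ∃ w : ℕ × ℕ × Γ × ℕ × ℕ,
          (w.1 < n ∧ l w.1 ≤ w.2.1 ∧ w.2.1 ≤ k w.1 ∧ w.2.2.1 ∈ H) ∧
          φ^[w.2.2.2.1 * m] z = φ^[w.2.2.2.2 * m + w.2.1] w.2.2.1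
        then y h.choose.1 (φ^[h.choose.2.1] h.choose.2.2.1) else u, ?_, ?_⟩
      · intro z
        dsimp only
        split_ifs with h1 h2 h2
        · -- both related: values agree via combine (use z as common point)
          obtain ⟨⟨hj1, hl1, hk1, hγ1⟩, hr1⟩ := h1.choose_spec
          obtain ⟨⟨hj2, hl2, hk2, hγ2⟩, hr2⟩ := h2.choose_spec
          have hr1' : φ^[(h1.choose.2.2.2.1 + 1) * m] z
              = φ^[h1.choose.2.2.2.2 * m + h1.choose.2.1] h1.choose.2.2.1 := by
            calc φ^[(h1.choose.2.2.2.1 + 1) * m] z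
                = φ^[h1.choose.2.2.2.1 * m + m] z := iterate_congr _ _ _ (by ring)
              _ = φ^[h1.choose.2.2.2.1 * m] (φ^[m] z) := Function.iterate_add_apply _ _ _ _
              _ = φ^[h1.choose.2.2.2.2 * m + h1.choose.2.1] h1.choose.2.2.1 := hr1
          exact combine z _ _ _ _ _ _ _ _ _ _ hj1 hl1 hk1 hγ1 hj2 hl2 hk2 hγ2 hr1' hr2
        · -- φ^[m] z related but z not: contradiction
          exfalso
          apply h2
          obtain ⟨⟨hj1, hl1, hk1, hγ1⟩, hr1⟩ := h1.choose_spec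
          refine ⟨(h1.choose.1, h1.choose.2.1, h1.choose.2.2.1,
            h1.choose.2.2.2.1 + 1, h1.choose.2.2.2.2), ⟨hj1, hl1, hk1, hγ1⟩, ?_⟩
          calc φ^[(h1.choose.2.2.2.1 + 1) * m] z
              = φ^[h1.choose.2.2.2.1 * m + m] z := iterate_congr _ _ _ (by ring)
            _ = φ^[h1.choose.2.2.2.1 * m] (φ^[m] z) := Function.iterate_add_apply _ _ _ _
            _ = φ^[h1.choose.2.2.2.2 * m + h1.choose.2.1] h1.choose.2.2.1 := hr1
        · -- z related but φ^[m] z not: contradiction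
          exfalso
          apply h1
          obtain ⟨⟨hj2, hl2, hk2, hγ2⟩, hr2⟩ := h2.choose_spec
          refine ⟨(h2.choose.1, h2.choose.2.1, h2.choose.2.2.1,
            h2.choose.2.2.2.1, h2.choose.2.2.2.2 + 1), ⟨hj2, hl2, hk2, hγ2⟩, ?_⟩
          calc φ^[h2.choose.2.2.2.1 * m] (φ^[m] z)
              = φ^[h2.choose.2.2.2.1 * m + m] z := (Function.iterate_add_apply _ _ _ _).symm
            _ = φ^[m + h2.choose.2.2.2.1 * m] z := iterate_congr _ _ _ (by ring)
            _ = φ^[m] (φ^[h2.choose.2.2.2.1 * m] z) := Function.iterate_add_apply _ _ _ _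
            _ = φ^[m] (φ^[h2.choose.2.2.2.2 * m + h2.choose.2.1] h2.choose.2.2.1) := by
                rw [hr2]
            _ = φ^[m + (h2.choose.2.2.2.2 * m + h2.choose.2.1)] h2.choose.2.2.1 :=
                (Function.iterate_add_apply _ _ _ _).symm
            _ = φ^[(h2.choose.2.2.2.2 + 1) * m + h2.choose.2.1] h2.choose.2.2.1 :=
                iterate_congr _ _ _ (by ring)
        · rfl
      · intro j i γ a b z hj hli hik hγ hrel
        dsimp only
        split_ifs with h
        · obtain ⟨⟨hj1, hl1, hk1, hγ1⟩, hr1⟩ := h.choose_spec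
          exact combine z _ _ _ _ _ j i γ a b hj1 hl1 hk1 hγ1 hj hli hik hγ hr1 hrel
        · exact absurd ⟨(j, i, γ, a, b), ⟨hj, hli, hik, hγ⟩, hrel⟩ h
    obtain ⟨x, hxper, hxval⟩ := hmain
    refine ⟨x, ⟨m, by omega, ?_⟩, ?_⟩
    · funext z
      rw [genShift_iter]
      exact hxper z
    · intro j hj i hli hik
      apply hHD
      intro γ hγ
      show ((genShift φ)^[i] x) γ = ((genShift φ)^[i] (y j)) γ
      rw [genShift_iter, genShift_iter]
      apply hxval j i γ 0 0 (φ^[i] γ) hj hli hik hγ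
      simp
end

section
/- If two dynamical systems ((Z,ℱ),f) and ((Y,𝒢),h) on uniform spaces both have the uniform stroboscopical property, then their product ((Z×Y, ℱ×𝒢), f×h), where (f×h)(u,v) = (f(u),h(v)), has the uniform stroboscopical property. -/
open Filter

/-- The uniform stroboscopical property of a dynamical system `(Z, f)` on a uniform
space: every strictly increasing sequence `A` in `ℕ` has a subsequence `(A (k i))`
for which there is `ϱ : Z → Z` with `f^[A (k i)] ∘ ϱ` converging uniformly to `id`. -/
def UnifStrob {Z : Type*} [UniformSpace Z] (f : Z → Z) : Prop :=
  ∀ A : ℕ → ℕ, StrictMono A → ∃ k : ℕ → ℕ, StrictMono k ∧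
    ∃ ρ : Z → Z, TendstoUniformly (fun i z => f^[A (k i)] (ρ z)) id atTop

/-! Pass to a subsequence for `f`, then to a further subsequence of it for `h`; uniform
convergence survives passing to subsequences, and uniform convergence of both factors along
the same index gives uniform convergence of the product maps. -/

section UniformConvergence

variable {ι κ α β γ δ : Type*} [UniformSpace β] [UniformSpace δ]

theorem TendstoUniformly.comp_tendsto {F : ι → α → β} {f : α → β} {p : Filter ι}
    (hF : TendstoUniformly F f p) {g : κ → ι} {q : Filter κ} (hg : Tendsto g q p) :
    TendstoUniformly (fun i => F (g i)) f q :=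
  fun u hu => hg.eventually (hF u hu)

theorem TendstoUniformly.prodMap_diag {F : ι → α → β} {f : α → β} {G : ι → γ → δ} {g : γ → δ}
    {p : Filter ι} (hF : TendstoUniformly F f p) (hG : TendstoUniformly G g p) :
    TendstoUniformly (fun i => Prod.map (F i) (G i)) (Prod.map f g) p :=
  (hF.prodMap hG).comp_tendsto tendsto_diag

end UniformConvergence

theorem UnifStrob.prodMap {Z Y : Type*} [UniformSpace Z] [UniformSpace Y] {f : Z → Z}
    {h : Y → Y} (hf : UnifStrob f) (hh : UnifStrob h) : UnifStrob (Prod.map f h) := by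
  intro A hA
  obtain ⟨k₁, hk₁, ρ₁, h₁⟩ := hf A hA
  obtain ⟨k₂, hk₂, ρ₂, h₂⟩ := hh (A ∘ k₁) (hA.comp hk₁)
  refine ⟨k₁ ∘ k₂, hk₁.comp hk₂, Prod.map ρ₁ ρ₂, ?_⟩
  simp only [Prod.map_iterate]
  rw [← Prod.map_id]
  exact (h₁.comp_tendsto hk₂.tendsto_atTop).prodMap_diag h₂

/-- the product of two dynamical systems with the uniform
stroboscopical property has the uniform stroboscopical property (with the product
uniform structure). -/
theorem stmt_11 {Z Y : Type*} [UniformSpace Z] [UniformSpace Y] (f : Z → Z) (h : Y → Y)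
    (hf : UnifStrob f) (hh : UnifStrob h) :
    UnifStrob (fun p : Z × Y => (f p.1, h p.2)) :=
  hf.prodMap hh
end

section
/- Let F be a Fort space with particular point b and let Y₂ be a Fort space with particular point b₂. A map f : F → Y₂ is continuous if and only if either (i) f(b) = b₂ and f⁻¹(y) is finite for every y ∈ Y₂ \ {b₂}, or (ii) f(b) ≠ b₂ and F \ f⁻¹(f(b)) is finite. -/
open Filter

/-- The Fort topology on a set `F` with particular point `b`:
`U` is open iff `b ∉ U` or `F \ U` is finite. -/
def fortTopology {F : Type*} (b : F) : TopologicalSpace F where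
  IsOpen U := b ∉ U ∨ (Uᶜ : Set F).Finite
  isOpen_univ := Or.inr (by simp)
  isOpen_inter := by
    rintro U V (hU | hU) hV
    · exact Or.inl fun h => hU h.1
    · rcases hV with hV | hV
      · exact Or.inl fun h => hV h.2
      · exact Or.inr (by rw [Set.compl_inter]; exact hU.union hV)
  isOpen_sUnion := by
    intro S hS
    by_cases hb : b ∈ ⋃₀ S
    · obtain ⟨U, hU, hbU⟩ := hb
      rcases hS U hU with h | h
      · exact absurd hbU h
      · exact Or.inr (h.subset (Set.compl_subset_compl.mpr (Set.subset_sUnion_of_mem hU)))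
    · exact Or.inl hb

/-- The basic entourage `γ_H = ((F \ H) × (F \ H)) ∪ Δ_H` for `H ⊆ F`. -/
def fortEnt {F : Type*} (H : Set F) : Set (F × F) :=
  (Hᶜ ×ˢ Hᶜ) ∪ {p : F × F | p.1 = p.2 ∧ p.1 ∈ H}

/-- Membership in the unique compatible uniform structure `𝒦` on the Fort space `F`
with particular point `b`: `D` contains some `γ_H` with `H ⊆ F \ {b}` finite. -/
def IsFortEntourage {F : Type*} (b : F) (D : Set (F × F)) : Prop :=
  ∃ H : Set F, H.Finite ∧ b ∉ H ∧ fortEnt H ⊆ D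

/-- a map between Fort spaces is continuous iff either it maps the
particular point to the particular point and fibers over other points are finite,
or it does not and is constant off a finite set. -/
theorem stmt_14 {F Y₂ : Type*} (b : F) (b₂ : Y₂) (f : F → Y₂) :
    @Continuous F Y₂ (fortTopology b) (fortTopology b₂) f ↔
      ((f b = b₂ ∧ ∀ y : Y₂, y ≠ b₂ → (f ⁻¹' {y}).Finite) ∨
       (f b ≠ b₂ ∧ ((f ⁻¹' {f b})ᶜ : Set F).Finite)) := by
  letI : TopologicalSpace F := fortTopology b
  letI : TopologicalSpace Y₂ := fortTopology b₂
  have hopF : ∀ U : Set F, IsOpen U ↔ b ∉ U ∨ (Uᶜ : Set F).Finite := fun _ => Iff.rfl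
  have hopY : ∀ V : Set Y₂, IsOpen V ↔ b₂ ∉ V ∨ (Vᶜ : Set Y₂).Finite := fun _ => Iff.rfl
  rw [continuous_def]
  constructor
  · intro h
    by_cases hb : f b = b₂
    · left
      refine ⟨hb, fun y hy => ?_⟩
      have hV : IsOpen ({y}ᶜ : Set Y₂) := (hopY _).mpr (Or.inr (by simp))
      rcases (hopF _).mp (h _ hV) with h1 | h1
      · exact absurd (by simp [hb, Ne.symm hy] : b ∈ f ⁻¹' {y}ᶜ) h1
      · simpa using h1
    · right
      refine ⟨hb, ?_⟩
      have hV : IsOpen ({f b} : Set Y₂) := (hopY _).mpr (Or.inl (by simpa using Ne.symm hb))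
      rcases (hopF _).mp (h _ hV) with h1 | h1
      · exact absurd rfl h1
      · exact h1
  · rintro (⟨hb, hfib⟩ | ⟨hb, hfin⟩) V hV
    · by_cases hbV : f b ∈ V
      · refine (hopF _).mpr (Or.inr ?_)
        rcases (hopY _).mp hV with h1 | h1
        · exact absurd (hb ▸ hbV) h1
        · have : (f ⁻¹' V)ᶜ = ⋃ y ∈ (Vᶜ : Set Y₂), f ⁻¹' {y} := by
            ext x; simp
          rw [this]
          exact h1.biUnion fun y hy => hfib y (fun h => hy (h ▸ hb ▸ hbV))
      · exact (hopF _).mpr (Or.inl hbV)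
    · by_cases hbV : f b ∈ V
      · refine (hopF _).mpr (Or.inr (hfin.subset ?_))
        intro x hx
        simp only [Set.mem_compl_iff, Set.mem_preimage, Set.mem_singleton_iff] at *
        exact fun h => hx (h ▸ hbV)
      · exact (hopF _).mpr (Or.inl hbV)
end

section
/- Let F be a Fort space with particular point b and 𝔥 : F → F continuous. If (F, 𝔥) has the almost weak specification property, then ⋂_{n≥1} 𝔥^n(F) is a singleton. -/
open Filter

/-- Almost weak specification property for a self-map `𝔥` of the Fort space `F`
with particular point `b`. -/
def FortAlmostWeakSpec {F : Type*} (b : F) (h : F → F) : Prop :=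
  ∀ D : Set (F × F), IsFortEntourage b D →
    ∃ N : ℕ → ℕ, Tendsto (fun n : ℕ => (N n : ℝ) / (n : ℝ)) atTop (nhds 0) ∧
      ∀ n : ℕ, 2 ≤ n → ∀ y : ℕ → F, ∀ l k : ℕ → ℕ,
        (∀ j, j < n → l j ≤ k j) →
        (∀ j, j + 1 < n → k j < l (j + 1) ∧ N (k (j + 1) - l (j + 1)) ≤ l (j + 1) - k j) →
        ∃ x : F, ∀ j, j < n → ∀ i, l j ≤ i → i ≤ k j → (h^[i] x, h^[i] (y j)) ∈ D

/-- Weak specification property for a self-map `𝔥` of the Fort space `F`. -/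
def FortWeakSpec {F : Type*} (b : F) (h : F → F) : Prop :=
  ∀ D : Set (F × F), IsFortEntourage b D →
    ∃ N : ℕ,
      ∀ n : ℕ, 2 ≤ n → ∀ y : ℕ → F, ∀ l k : ℕ → ℕ,
        (∀ j, j < n → l j ≤ k j) →
        (∀ j, j + 1 < n → k j < l (j + 1) ∧ N ≤ l (j + 1) - k j) →
        ∃ x : F, ∀ j, j < n → ∀ i, l j ≤ i → i ≤ k j → (h^[i] x, h^[i] (y j)) ∈ D

/-- Specification property for a self-map `𝔥` of the Fort space `F`: weak
specification with a periodic tracing point. -/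
def FortSpec {F : Type*} (b : F) (h : F → F) : Prop :=
  ∀ D : Set (F × F), IsFortEntourage b D →
    ∃ N : ℕ,
      ∀ n : ℕ, 2 ≤ n → ∀ y : ℕ → F, ∀ l k : ℕ → ℕ,
        (∀ j, j < n → l j ≤ k j) →
        (∀ j, j + 1 < n → k j < l (j + 1) ∧ N ≤ l (j + 1) - k j) →
        ∃ x : F, (∃ m : ℕ, 1 ≤ m ∧ h^[m] x = x) ∧
          ∀ j, j < n → ∀ i, l j ≤ i → i ≤ k j → (h^[i] x, h^[i] (y j)) ∈ D


lemma fortEnt_eq_left {F : Type*} {H : Set F} {z t : F} (ht : t ∈ H)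
    (h : (z, t) ∈ fortEnt H) : z = t := by
  rcases h with ⟨-, h2⟩ | ⟨h1, -⟩
  · exact absurd ht h2
  · exact h1

lemma range_iterate_anti {F : Type*} (𝔥 : F → F) {m n : ℕ} (h : n ≤ m) :
    Set.range (𝔥^[m]) ⊆ Set.range (𝔥^[n]) := by
  rintro _ ⟨x, rfl⟩
  exact ⟨𝔥^[m - n] x, by rw [← Function.iterate_add_apply, Nat.add_sub_cancel' h]⟩

/-- Any point `u ≠ b` lying in every eventual image is a fixed point. -/
lemma key_fixed {F : Type*} (b : F) (𝔥 : F → F) (hspec : FortAlmostWeakSpec b 𝔥)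
    {u : F} (hub : u ≠ b) (hu : ∀ m, 1 ≤ m → u ∈ Set.range (𝔥^[m])) : 𝔥 u = u := by
  obtain ⟨N, -, hN⟩ := hspec (fortEnt {u})
    ⟨{u}, Set.finite_singleton u, by simpa using fun h => hub h.symm, subset_rfl⟩
  have hper : ∀ d, N 0 + 1 ≤ d → 𝔥^[d] u = u := by
    intro d hd
    obtain ⟨w0, hw0⟩ := hu 1 le_rfl
    obtain ⟨w1, hw1⟩ := hu (1 + d) (by omega)
    set y : ℕ → F := fun j => if j = 0 then w0 else w1 with hy
    obtain ⟨x, hx⟩ := hN 2 le_rfl y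
      (fun j => 1 + j * d) (fun j => 1 + j * d) (fun j _ => le_rfl)
      (fun j hj => by
        have hj0 : j = 0 := by omega
        subst hj0
        constructor
        · show 1 + 0 * d < 1 + (0 + 1) * d
          omega
        · show N (1 + (0 + 1) * d - (1 + (0 + 1) * d)) ≤ 1 + (0 + 1) * d - (1 + 0 * d)
          simp only [Nat.sub_self]
          omega)
    have h0 := hx 0 (by norm_num) 1 (by omega) (by omega)
    have h1 := hx 1 (by norm_num) (1 + d) (by omega) (by omega)
    rw [show 𝔥^[1] (y 0) = u from hw0] at h0
    rw [show 𝔥^[1 + d] (y 1) = u from hw1] at h1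
    have e0 : 𝔥^[1] x = u := fortEnt_eq_left (Set.mem_singleton u) h0
    have e1 : 𝔥^[1 + d] x = u := fortEnt_eq_left (Set.mem_singleton u) h1
    calc 𝔥^[d] u = 𝔥^[d] (𝔥^[1] x) := by rw [e0]
      _ = 𝔥^[d + 1] x := (Function.iterate_add_apply 𝔥 d 1 x).symm
      _ = u := by rw [Nat.add_comm d 1, e1]
  have a1 := hper (N 0 + 1) le_rfl
  have a2 := hper (N 0 + 2) (by omega)
  calc 𝔥 u = 𝔥 (𝔥^[N 0 + 1] u) := by rw [a1]
    _ = 𝔥^[N 0 + 2] u := (Function.iterate_succ_apply' 𝔥 (N 0 + 1) u).symm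
    _ = u := a2

/-- Two distinct points cannot both lie in every eventual image. -/
lemma no_pair {F : Type*} (b : F) (𝔥 : F → F) (hspec : FortAlmostWeakSpec b 𝔥)
    {u v : F} (hub : u ≠ b) (huv : u ≠ v)
    (hu : ∀ m, 1 ≤ m → u ∈ Set.range (𝔥^[m]))
    (hv : ∀ m, 1 ≤ m → v ∈ Set.range (𝔥^[m])) : False := by
  have hfix : 𝔥 u = u := key_fixed b 𝔥 hspec hub hu
  obtain ⟨N, -, hN⟩ := hspec (fortEnt {u})
    ⟨{u}, Set.finite_singleton u, by simpa using fun h => hub h.symm, subset_rfl⟩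
  set g := N 0 + 1 with hg
  obtain ⟨w, hw⟩ := hv g (by omega)
  set y : ℕ → F := fun j => if j = 0 then u else w with hy
  obtain ⟨x, hx⟩ := hN 2 le_rfl y
    (fun j => j * g) (fun j => j * g) (fun j _ => le_rfl)
    (fun j hj => by
      have hj0 : j = 0 := by omega
      subst hj0
      constructor
      · show 0 * g < (0 + 1) * g
        omega
      · show N ((0 + 1) * g - (0 + 1) * g) ≤ (0 + 1) * g - 0 * g
        simp only [Nat.sub_self]
        omega)
  have h0 := hx 0 (by norm_num) 0 (by omega) (by omega)
  have h1 := hx 1 (by norm_num) g (by omega) (by omega)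
  rw [show 𝔥^[0] (y 0) = u from rfl] at h0
  rw [show 𝔥^[g] (y 1) = v from hw] at h1
  have e0 : 𝔥^[0] x = u := fortEnt_eq_left (Set.mem_singleton u) h0
  have e1 : 𝔥^[g] x = u := by
    have : x = u := e0
    rw [this]
    exact Function.iterate_fixed hfix g
  rw [e1] at h1
  rcases h1 with ⟨h2, -⟩ | ⟨h2, -⟩
  · exact h2 (Set.mem_singleton u)
  · exact huv h2

/-- There is a point in every eventual image. -/
lemma exists_mem_all {F : Type*} (b : F) (𝔥 : F → F)
    (hcont : @Continuous F F (fortTopology b) (fortTopology b) 𝔥) :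
    ∃ c : F, ∀ m, 1 ≤ m → c ∈ Set.range (𝔥^[m]) := by
  by_cases hb : 𝔥 b = b
  · exact ⟨b, fun m _ => ⟨b, Function.iterate_fixed hb m⟩⟩
  · have hop : (fortTopology b).IsOpen ({𝔥 b} : Set F) := by
      show b ∉ ({𝔥 b} : Set F) ∨ _
      exact Or.inl (fun h => hb (Set.mem_singleton_iff.mp h).symm)
    have hpre : (fortTopology b).IsOpen (𝔥 ⁻¹' {𝔥 b}) :=
      continuous_def.mp hcont {𝔥 b} hop
    have hS : ((𝔥 ⁻¹' {𝔥 b})ᶜ : Set F).Finite := by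
      have hpre' : b ∉ (𝔥 ⁻¹' {𝔥 b} : Set F) ∨ ((𝔥 ⁻¹' {𝔥 b})ᶜ : Set F).Finite := hpre
      rcases hpre' with h | h
      · exact absurd (Set.mem_singleton (𝔥 b)) h
      · exact h
    have hrange : (Set.range 𝔥).Finite := by
      apply Set.Finite.subset (Set.Finite.insert (𝔥 b) (hS.image 𝔥))
      rintro _ ⟨z, rfl⟩
      by_cases hz : 𝔥 z = 𝔥 b
      · exact Or.inl hz
      · exact Or.inr ⟨z, hz, rfl⟩
    have hfin : ∀ n : ℕ, (Set.range (𝔥^[n + 1])).Finite := by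
      intro n
      apply hrange.subset
      have h1 := range_iterate_anti 𝔥 (Nat.le_add_left 1 n)
      simpa using h1
    set P : ℕ → ℕ := fun n => (Set.range (𝔥^[n + 1])).ncard with hP
    have hne : (Set.range P).Nonempty := ⟨P 0, Set.mem_range_self 0⟩
    obtain ⟨n0, hn0⟩ := Nat.sInf_mem hne
    have hmin : ∀ n, P n0 ≤ P n := fun n => hn0 ▸ Nat.sInf_le (Set.mem_range_self n)
    refine ⟨𝔥^[n0 + 1] b, fun m hm => ?_⟩
    have hc : 𝔥^[n0 + 1] b ∈ Set.range (𝔥^[n0 + 1]) := Set.mem_range_self b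
    rcases le_or_gt m (n0 + 1) with h | h
    · exact range_iterate_anti 𝔥 h hc
    · have hsub : Set.range (𝔥^[m]) ⊆ Set.range (𝔥^[n0 + 1]) := range_iterate_anti 𝔥 h.le
      have heq : Set.range (𝔥^[m]) = Set.range (𝔥^[n0 + 1]) := by
        apply Set.eq_of_subset_of_ncard_le hsub _ (hfin n0)
        have h2 := hmin (m - 1)
        rw [hP] at h2
        simpa [Nat.sub_add_cancel (by omega : 1 ≤ m)] using h2
      rw [heq]
      exact hc

/-- if `(F, 𝔥)` (with `𝔥` continuous on the Fort space `F`) has the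
almost weak specification property, then `⋂_{n ≥ 1} 𝔥^n(F)` is a singleton. -/
theorem stmt_15 {F : Type*} (b : F) (𝔥 : F → F)
    (hcont : @Continuous F F (fortTopology b) (fortTopology b) 𝔥)
    (hspec : FortAlmostWeakSpec b 𝔥) :
    ∃ c : F, (⋂ n ∈ Set.Ici 1, Set.range (𝔥^[n])) = {c} := by
  obtain ⟨c, hc⟩ := exists_mem_all b 𝔥 hcont
  refine ⟨c, Set.eq_singleton_iff_unique_mem.mpr ⟨?_, ?_⟩⟩
  · exact Set.mem_iInter₂.mpr fun n hn => hc n hn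
  · intro z hz
    have hz' : ∀ m, 1 ≤ m → z ∈ Set.range (𝔥^[m]) := fun m hm =>
      Set.mem_iInter₂.mp hz m hm
    by_contra hne
    by_cases hzb : z = b
    · exact no_pair b 𝔥 hspec (fun h => hne (hzb.trans h.symm))
        (fun h => hne h.symm) hc hz'
    · exact no_pair b 𝔥 hspec hzb hne hz' hc
end

section
/- Let F be a Fort space with particular point b and 𝔥 : F → F continuous. If ⋂_{n≥1} 𝔥^n(F) is a singleton, then (F, 𝔥) has the weak specification property. -/
open Filter

lemma fort_range_iter_anti {F : Type*} (h : F → F) {m n : ℕ} (hmn : m ≤ n) :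
    Set.range (h^[n]) ⊆ Set.range (h^[m]) := by
  obtain ⟨k, rfl⟩ := Nat.exists_eq_add_of_le hmn
  rintro _ ⟨z, rfl⟩
  exact ⟨h^[k] z, (Function.iterate_add_apply h m k z).symm⟩

lemma fort_diag_mem {F : Type*} (H : Set F) (z : F) : (z, z) ∈ fortEnt H := by
  by_cases hz : z ∈ H
  · exact Or.inr ⟨rfl, hz⟩
  · exact Or.inl ⟨hz, hz⟩

lemma fort_key {F : Type*} (b c : F) (𝔥 : F → F)
    (hcont : @Continuous F F (fortTopology b) (fortTopology b) 𝔥)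
    (hc : (⋂ n ∈ Set.Ici 1, Set.range (𝔥^[n])) = {c})
    (H : Set F) (hH : H.Finite) (hb : b ∉ H) :
    ∃ N : ℕ, ∀ i, N ≤ i → ∀ z w, (𝔥^[i] z, 𝔥^[i] w) ∈ fortEnt H := by
  have escape : ∀ a : F, ∃ n, a ≠ c → a ∉ Set.range (𝔥^[n]) := by
    intro a
    by_cases ha : a = c
    · exact ⟨1, fun h => absurd ha h⟩
    · have h1 : a ∉ ({c} : Set F) := ha
      rw [← hc] at h1
      simp only [Set.mem_iInter, not_forall] at h1
      obtain ⟨n, _, hna⟩ := h1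
      exact ⟨n, fun _ => hna⟩
  choose f hf using escape
  by_cases hbb : 𝔥 b = b
  · have hcb : c = b := by
      have hbmem : b ∈ ({c} : Set F) := by
        rw [← hc]
        simp only [Set.mem_iInter]
        intro n _
        exact ⟨b, Function.iterate_fixed hbb n⟩
      exact (Set.mem_singleton_iff.mp hbmem).symm
    refine ⟨hH.toFinset.sup f, fun i hi z w => Or.inl ⟨?_, ?_⟩⟩ <;>
    · intro hmem
      have hne : _ ≠ c := fun e => hb (hcb ▸ e ▸ hmem)
      have hle : f _ ≤ hH.toFinset.sup f := Finset.le_sup (hH.mem_toFinset.mpr hmem)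
      exact hf _ hne (fort_range_iter_anti 𝔥 (hle.trans hi) ⟨_, rfl⟩)
  · have hfin : (Set.range 𝔥).Finite := by
      have hU : (fortTopology b).IsOpen {𝔥 b} := Or.inl (by simpa using fun e => hbb e.symm)
      have hpre := @Continuous.isOpen_preimage F F (fortTopology b) (fortTopology b) 𝔥 hcont _ hU
      rcases hpre with hpre | hpre
      · exact absurd rfl hpre
      · have : Set.range 𝔥 ⊆ 𝔥 '' ((𝔥 ⁻¹' {𝔥 b})ᶜ) ∪ {𝔥 b} := by
          rintro _ ⟨z, rfl⟩
          by_cases hz : z ∈ 𝔥 ⁻¹' {𝔥 b}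
          · exact Or.inr hz
          · exact Or.inl ⟨z, hz, rfl⟩
        exact Set.Finite.subset ((hpre.image 𝔥).union (Set.finite_singleton _)) this
    refine ⟨1 + hfin.toFinset.sup f, fun i hi z w => ?_⟩
    have hconst : ∀ z : F, 𝔥^[i] z = c := by
      intro z
      by_contra hne
      have hmem : 𝔥^[i] z ∈ Set.range 𝔥 := by
        obtain ⟨j, rfl⟩ : ∃ j, i = j + 1 := ⟨i - 1, by omega⟩
        exact ⟨𝔥^[j] z, (Function.iterate_succ_apply' 𝔥 j z).symm⟩
      have hle : f (𝔥^[i] z) ≤ 1 + hfin.toFinset.sup f :=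
        le_trans (Finset.le_sup (hfin.mem_toFinset.mpr hmem)) (by omega)
      exact hf _ hne (fort_range_iter_anti 𝔥 (hle.trans hi) ⟨z, rfl⟩)
    rw [hconst z, hconst w]
    exact fort_diag_mem H c

/-- if `⋂_{n ≥ 1} 𝔥^n(F)` is a singleton, then `(F, 𝔥)` has the weak
specification property. -/
theorem stmt_16 {F : Type*} (b : F) (𝔥 : F → F)
    (hcont : @Continuous F F (fortTopology b) (fortTopology b) 𝔥)
    (hsing : ∃ c : F, (⋂ n ∈ Set.Ici 1, Set.range (𝔥^[n])) = {c}) :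
    FortWeakSpec b 𝔥 := by
  obtain ⟨c, hc⟩ := hsing
  rintro D ⟨H, hHfin, hbH, hHD⟩
  obtain ⟨N, hN⟩ := fort_key b c 𝔥 hcont hc H hHfin hbH
  refine ⟨N, fun n hn y l k hlk hgap => ⟨y 0, fun j hj i hli hik => ?_⟩⟩
  match j with
  | 0 => exact hHD (fort_diag_mem H _)
  | (j' + 1) =>
    have hg := hgap j' hj
    have : N ≤ l (j' + 1) := by omega
    exact hHD (hN i (this.trans hli) _ _)
end

section
/- Let F be a Fort space with particular point b and 𝔥 : F → F continuous. Then (F, 𝔥) has the specification property if and only if F = {b}. -/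
open Filter

/-!
If the Fort space has a point `a ≠ b`, the entourage `γ_{a}` relates `u` and `v` exactly when
`u = a ↔ v = a`. Tracing the constant orbit of `a` shows that `a` is periodic, say `h^[L] a = a`
with `L` beyond the specification gap. Tracing `b` at time `0` and `a` at time `L` then yields a
periodic point `x ≠ a` with `h^[L] x = a`; but `x` is also periodic under `h^[L]`, which fixes `a`,
so `x = a`.
-/

open Function

lemma mem_fortEnt_singleton_iff {F : Type*} {a u v : F} :
    (u, v) ∈ fortEnt {a} ↔ (u = a ↔ v = a) := by
  simp only [fortEnt, Set.mem_union, Set.mem_prod, Set.mem_compl_iff, Set.mem_singleton_iff,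
    Set.mem_ofPred_eq]
  grind

lemma isFortEntourage_fortEnt_singleton {F : Type*} {a b : F} (hab : a ≠ b) :
    IsFortEntourage b (fortEnt {a}) :=
  ⟨{a}, Set.finite_singleton a, hab.symm, subset_rfl⟩

section

variable {F : Type*} {b : F} {h : F → F}

lemma FortSpec.exists_periodic_trace_two (hspec : FortSpec b h) {D : Set (F × F)}
    (hD : IsFortEntourage b D) :
    ∃ N, ∀ (y₀ y₁ : F) (L : ℕ), N < L →
      ∃ x ∈ periodicPts h, (x, y₀) ∈ D ∧ (h^[L] x, h^[L] y₁) ∈ D := by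
  obtain ⟨N, hN⟩ := hspec D hD
  refine ⟨N, fun y₀ y₁ L hL => ?_⟩
  let t : ℕ → ℕ := fun j => if j = 0 then 0 else L
  obtain ⟨x, ⟨m, hm, hmx⟩, htrace⟩ := hN 2 le_rfl (fun j => if j = 0 then y₀ else y₁) t t
    (fun _ _ => le_rfl) (fun j hj => by obtain rfl : j = 0 := (by omega); simp [t]; omega)
  exact ⟨x, mk_mem_periodicPts hm hmx, by simpa [t] using htrace 0 two_pos 0 le_rfl le_rfl,
    by simpa [t] using htrace 1 one_lt_two L le_rfl le_rfl⟩

theorem FortSpec.eq_particularPoint (hspec : FortSpec b h) (a : F) : a = b := by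
  by_contra hab
  obtain ⟨N, hN⟩ := hspec.exists_periodic_trace_two (isFortEntourage_fortEnt_singleton hab)
  simp only [mem_fortEnt_singleton_iff] at hN
  have ha_periodic : a ∈ periodicPts h := by
    obtain ⟨x, hx, hxa, -⟩ := hN a a (N + 1) (Nat.lt_succ_self N)
    exact (hxa.mpr rfl) ▸ hx
  obtain ⟨m, hm, ham⟩ := ha_periodic
  have hL : N < m * (N + 1) := Nat.lt_of_succ_le (Nat.le_mul_of_pos_left _ hm)
  have ha_fixed : IsFixedPt h^[m * (N + 1)] a := ham.mul_const (N + 1)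
  obtain ⟨x, ⟨p, hp, hpx⟩, hxb, hxa⟩ := hN b a _ hL
  have hx_ne : x ≠ a := fun hxa' => hab (hxb.mp hxa').symm
  exact hx_ne <| (hpx.iterate _).eq_of_apply_eq_same (ha_fixed.isPeriodicPt p) hp
    ((hxa.mpr ha_fixed).trans ha_fixed.symm)

theorem fortSpec_of_forall_eq (hall : ∀ x : F, x = b) : FortSpec b h := by
  rintro D ⟨H, -, hbH, hHD⟩
  refine ⟨0, fun _ _ y _ _ _ _ => ⟨b, ⟨1, le_rfl, (hall _).trans (hall _).symm⟩, ?_⟩⟩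
  intro j _ i _ _
  rw [hall (h^[i] b), hall (h^[i] (y j))]
  exact hHD (Or.inl ⟨hbH, hbH⟩)

end

theorem stmt_17_general {F : Type*} (b : F) (𝔥 : F → F) :
    FortSpec b 𝔥 ↔ ∀ x : F, x = b :=
  ⟨fun hspec => hspec.eq_particularPoint, fortSpec_of_forall_eq⟩

/-- `(F, 𝔥)` has the specification property iff `F = {b}`. -/
theorem stmt_17 {F : Type*} (b : F) (𝔥 : F → F)
    (hcont : @Continuous F F (fortTopology b) (fortTopology b) 𝔥) :
    FortSpec b 𝔥 ↔ ∀ x : F, x = b :=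
  stmt_17_general b 𝔥
end
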